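/- arXiv:2504.11859 — 2 statements merged into one kernel-verified Lean document; each statement's English description precedes it below -/
import Mathlib

section
/- Let S_P ⊆ (Fin m → Γ_P) and S_Q ⊆ (Fin n → Γ_Q) with bijection R : S_Q ≃ S_P, and structure functions g, f, v as in the meta-theorem (each f j injective, s j = f j ((R s) i) when g j = some i, s j = v j when g j = none), and suppose every index i : Fin m is hit by g. Then for every k, there exists a clue of size ≤ k uniquely determining an element of S_P if and only if there exists a clue of size ≤ k uniquely determining an element of S_Q. -/
/-!
A clue is determined by its support and the solution it singles out, so "some clue of size
at most `k` uniquely determines an element of `S`" says that some `s ∈ S` is the only element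
of `S` agreeing with it on some set of at most `k` positions. Under the bijection `R`, two
`Q`-solutions agree on positions `J` exactly when their `P`-images agree on the positions
`g` maps `J` to: constant positions agree anyway and each `f j` is injective. Since every
`P`-position is hit by `g`, determining sets of either side transfer to the other without
growing.
-/

open scoped Classical

def Satisfies {m : ℕ} {Γ : Type*} (c : Fin m → Option Γ) (s : Fin m → Γ) : Prop :=
  ∀ i a, c i = some a → s i = a

noncomputable def clueSize {m : ℕ} {Γ : Type*} (c : Fin m → Option Γ) : ℕ :=
  Set.ncard {i | c i ≠ none}

def UniqDetAt {m : ℕ} {Γ : Type*} (S : Set (Fin m → Γ)) (c : Fin m → Option Γ)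
    (s : Fin m → Γ) : Prop :=
  s ∈ S ∧ Satisfies c s ∧ ∀ t ∈ S, Satisfies c t → t = s

def UniqDet {m : ℕ} {Γ : Type*} (S : Set (Fin m → Γ)) (c : Fin m → Option Γ) : Prop :=
  ∃ s, UniqDetAt S c s

open Set

noncomputable def clueOn {m : ℕ} {Γ : Type*} (s : Fin m → Γ) (I : Set (Fin m)) :
    Fin m → Option Γ :=
  fun i => if i ∈ I then some (s i) else none

def Determines {ι Γ : Type*} (S : Set (ι → Γ)) (s : ι → Γ) (I : Set ι) : Prop :=
  ∀ t ∈ S, EqOn t s I → t = s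

section Clues

variable {m : ℕ} {Γ : Type*}

theorem satisfies_clueOn_iff {s t : Fin m → Γ} {I : Set (Fin m)} :
    Satisfies (clueOn s I) t ↔ EqOn t s I := by
  constructor
  · intro h i hi
    exact h i (s i) (if_pos hi)
  · intro h i a hia
    by_cases hi : i ∈ I
    · rw [clueOn, if_pos hi, Option.some_inj] at hia
      rw [h hi, hia]
    · simp [clueOn, hi] at hia

theorem clueSize_clueOn (s : Fin m → Γ) (I : Set (Fin m)) : clueSize (clueOn s I) = I.ncard := by
  unfold clueSize clueOn
  congr 1
  ext i
  by_cases hi : i ∈ I <;> simp [hi]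

theorem clueOn_support {c : Fin m → Option Γ} {s : Fin m → Γ} (h : Satisfies c s) :
    clueOn s {i | c i ≠ none} = c := by
  funext i
  cases hc : c i with
  | none => simp [clueOn, hc]
  | some a => simp [clueOn, hc, h i a hc]

theorem uniqDetAt_clueOn_iff {S : Set (Fin m → Γ)} {s : Fin m → Γ} {I : Set (Fin m)} :
    UniqDetAt S (clueOn s I) s ↔ s ∈ S ∧ Determines S s I := by
  simp only [UniqDetAt, Determines, satisfies_clueOn_iff, eqOn_refl, true_and]

theorem exists_clue_iff_exists_determines (S : Set (Fin m → Γ)) (k : ℕ) :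
    (∃ c : Fin m → Option Γ, clueSize c ≤ k ∧ UniqDet S c) ↔
      ∃ s ∈ S, ∃ I : Set (Fin m), I.ncard ≤ k ∧ Determines S s I := by
  constructor
  · rintro ⟨c, hk, s, hs⟩
    have hc := clueOn_support hs.2.1
    rw [← hc, clueSize_clueOn] at hk
    rw [← hc, uniqDetAt_clueOn_iff] at hs
    exact ⟨s, hs.1, _, hk, hs.2⟩
  · rintro ⟨s, hs, I, hk, hdet⟩
    exact ⟨clueOn s I, (clueSize_clueOn s I).trans_le hk, s,
      uniqDetAt_clueOn_iff.mpr ⟨hs, hdet⟩⟩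

end Clues

theorem Determines.mono {ι Γ : Type*} {S : Set (ι → Γ)} {s : ι → Γ} {I I' : Set ι}
    (h : Determines S s I) (hI : I ⊆ I') : Determines S s I' :=
  fun t ht heq => h t ht (heq.mono hI)

theorem determines_iff_forall_subtype {ι Γ : Type*} {S : Set (ι → Γ)} {s : ι → Γ} {I : Set ι} :
    Determines S s I ↔ ∀ t : ↥S, EqOn (t : ι → Γ) s I → (t : ι → Γ) = s :=
  ⟨fun h t => h t t.2, fun h t ht => h ⟨t, ht⟩⟩

section Transfer

variable {ι κ ΓP ΓQ : Type*} {SP : Set (ι → ΓP)} {SQ : Set (κ → ΓQ)} {R : ↥SQ ≃ ↥SP}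
  {g : κ → Option ι} {f : κ → ΓP → ΓQ} {v : κ → ΓQ}

theorem eqOn_iff_eqOn_preimage_image (hinj : ∀ j, Function.Injective (f j))
    (hdep : ∀ (s : ↥SQ) j i, g j = some i → (s : κ → ΓQ) j = f j ((R s : ι → ΓP) i))
    (hconst : ∀ (s : ↥SQ) j, g j = none → (s : κ → ΓQ) j = v j)
    (s t : ↥SQ) (J : Set κ) :
    EqOn (t : κ → ΓQ) s J ↔ EqOn (R t : ι → ΓP) (R s) (some ⁻¹' (g '' J)) := by
  constructor
  · rintro heq i ⟨j, hj, hgj⟩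
    apply hinj j
    rw [← hdep t j i hgj, ← hdep s j i hgj, heq hj]
  · intro heq j hj
    cases hgj : g j with
    | none => rw [hconst t j hgj, hconst s j hgj]
    | some i =>
      have hi : i ∈ some ⁻¹' (g '' J) := ⟨j, hj, hgj⟩
      rw [hdep t j i hgj, hdep s j i hgj, heq hi]

theorem determines_iff_determines_preimage_image (hinj : ∀ j, Function.Injective (f j))
    (hdep : ∀ (s : ↥SQ) j i, g j = some i → (s : κ → ΓQ) j = f j ((R s : ι → ΓP) i))
    (hconst : ∀ (s : ↥SQ) j, g j = none → (s : κ → ΓQ) j = v j)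
    (s : ↥SQ) (J : Set κ) :
    Determines SQ s J ↔ Determines SP (R s) (some ⁻¹' (g '' J)) := by
  calc Determines SQ s J ↔ ∀ t : ↥SQ, EqOn (t : κ → ΓQ) s J → (t : κ → ΓQ) = s :=
        determines_iff_forall_subtype
    _ ↔ ∀ t : ↥SQ, EqOn (R t : ι → ΓP) (R s) (some ⁻¹' (g '' J)) → (R t : ι → ΓP) = R s :=
        forall_congr' fun t => by
          rw [eqOn_iff_eqOn_preimage_image hinj hdep hconst s t J, Subtype.val_inj,
            Subtype.val_inj, R.apply_eq_iff_eq]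
    _ ↔ Determines SP (R s) (some ⁻¹' (g '' J)) :=
        (R.forall_congr_right
          (q := fun t : ↥SP => EqOn (t : ι → ΓP) (R s) _ → (t : ι → ΓP) = R s)).trans
          determines_iff_forall_subtype.symm

end Transfer

theorem ncard_preimage_some_image_le {ι κ : Type*} [Finite κ] (g : κ → Option ι) (J : Set κ) :
    (some ⁻¹' (g '' J)).ncard ≤ J.ncard :=
  calc (some ⁻¹' (g '' J)).ncard ≤ (g '' J).ncard :=
        ncard_le_ncard_of_injOn some (fun _ hi => hi) (Option.some_injective _).injOn
    _ ≤ J.ncard := ncard_image_le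

theorem exists_ncard_le_subset_preimage_some_image {ι κ : Type*} [Finite ι] {g : κ → Option ι}
    (hsurj : ∀ i, ∃ j, g j = some i) (I : Set ι) :
    ∃ J : Set κ, J.ncard ≤ I.ncard ∧ I ⊆ some ⁻¹' (g '' J) := by
  choose h hh using hsurj
  exact ⟨h '' I, ncard_image_le, fun i hi => ⟨h i, mem_image_of_mem h hi, hh i⟩⟩

theorem stmt4 {m n : ℕ} {ΓP ΓQ : Type*}
    (SP : Set (Fin m → ΓP)) (SQ : Set (Fin n → ΓQ))
    (R : ↥SQ ≃ ↥SP)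
    (g : Fin n → Option (Fin m)) (f : Fin n → ΓP → ΓQ) (v : Fin n → ΓQ)
    (hinj : ∀ j, Function.Injective (f j))
    (hdep : ∀ (s : ↥SQ) (j : Fin n) (i : Fin m),
      g j = some i → (s : Fin n → ΓQ) j = f j ((R s : Fin m → ΓP) i))
    (hconst : ∀ (s : ↥SQ) (j : Fin n), g j = none → (s : Fin n → ΓQ) j = v j)
    (hsurj : ∀ i : Fin m, ∃ j : Fin n, g j = some i) :
    ∀ k : ℕ,
      (∃ cP : Fin m → Option ΓP, clueSize cP ≤ k ∧ UniqDet SP cP) ↔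
      (∃ cQ : Fin n → Option ΓQ, clueSize cQ ≤ k ∧ UniqDet SQ cQ) := by
  intro k
  have transfer := determines_iff_determines_preimage_image hinj hdep hconst
  rw [exists_clue_iff_exists_determines, exists_clue_iff_exists_determines]
  constructor
  · rintro ⟨sP, hsP, I, hk, hdet⟩
    obtain ⟨J, hJ, hIJ⟩ := exists_ncard_le_subset_preimage_some_image hsurj I
    refine ⟨R.symm ⟨sP, hsP⟩, (R.symm _).2, J, hJ.trans hk, (transfer _ J).mpr ?_⟩
    rw [R.apply_symm_apply]
    exact hdet.mono hIJ
  · rintro ⟨sQ, hsQ, J, hk, hdet⟩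
    exact ⟨R ⟨sQ, hsQ⟩, (R _).2, _, (ncard_preimage_some_image_le g J).trans hk,
      (transfer ⟨sQ, hsQ⟩ J).mp hdet⟩
end

section
/- Let S ⊆ (Fin m → Γ) be finite and nonempty, and fix s ∈ S. Define D(s,t) = {i | s i ≠ t i} for t ∈ S, t ≠ s. Then a clue c consistent with s uniquely determines s if and only if for every t ∈ S with t ≠ s, there exists i ∈ D(s,t) with c i ≠ none. In particular, the minimum size of a clue uniquifying s equals the minimum size of a hitting set for the family {D(s,t) : t ∈ S, t ≠ s}. -/
open scoped Classical

/-!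
A clue consistent with `s` is satisfied by `t` exactly when `t` agrees with `s` on every revealed
cell, so it singles out `s` iff its revealed cells meet every difference set `D(s,t)`. Hence the
revealed cells of a uniquifying clue form a hitting set of the same size, and conversely revealing
`s` on a hitting set gives a uniquifying clue of the same size.
-/

section
variable {m : ℕ} {Γ : Type*}

theorem Satisfies.apply_eq_of_ne_none {c : Fin m → Option Γ} {s t : Fin m → Γ}
    (hs : Satisfies c s) (ht : Satisfies c t) {i : Fin m} (hi : c i ≠ none) : s i = t i := by
  obtain ⟨a, ha⟩ := Option.ne_none_iff_exists'.mp hi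
  exact (hs i a ha).trans (ht i a ha).symm

theorem Satisfies.of_eq_of_ne_none {c : Fin m → Option Γ} {s t : Fin m → Γ}
    (hs : Satisfies c s) (hst : ∀ i, c i ≠ none → s i = t i) : Satisfies c t :=
  fun i a ha => (hst i (by simp [ha])).symm.trans (hs i a ha)

theorem uniqDetAt_iff_forall_exists_ne {S : Set (Fin m → Γ)} {c : Fin m → Option Γ}
    {s : Fin m → Γ} (hs : s ∈ S) (hc : Satisfies c s) :
    UniqDetAt S c s ↔ ∀ t ∈ S, t ≠ s → ∃ i, s i ≠ t i ∧ c i ≠ none := by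
  refine ⟨fun ⟨_, _, huniq⟩ t ht hts => ?_, fun h => ⟨hs, hc, fun t ht hct => ?_⟩⟩
  · by_contra! hagree
    exact hts <| huniq t ht <| hc.of_eq_of_ne_none fun i hi => not_imp_comm.mp (hagree i) hi
  · by_contra hts
    obtain ⟨i, hi, hci⟩ := h t ht hts
    exact hi (hc.apply_eq_of_ne_none hct hci)

theorem clueSize_eq_card_filter (c : Fin m → Option Γ) :
    clueSize c = (Finset.univ.filter fun i => c i ≠ none).card := by
  rw [clueSize, ← Set.ncard_coe_finset, Finset.coe_filter_univ]

def revealOn (H : Finset (Fin m)) (s : Fin m → Γ) : Fin m → Option Γ :=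
  fun i => if i ∈ H then some (s i) else none

theorem revealOn_ne_none_iff {H : Finset (Fin m)} {s : Fin m → Γ} {i : Fin m} :
    revealOn H s i ≠ none ↔ i ∈ H := by
  by_cases hi : i ∈ H <;> simp [revealOn, hi]

theorem satisfies_revealOn (H : Finset (Fin m)) (s : Fin m → Γ) : Satisfies (revealOn H s) s := by
  intro i a ha
  by_cases hi : i ∈ H <;> simp_all [revealOn]

theorem clueSize_revealOn (H : Finset (Fin m)) (s : Fin m → Γ) :
    clueSize (revealOn H s) = H.card := by
  rw [clueSize_eq_card_filter]
  congr 1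
  ext i
  simp [revealOn_ne_none_iff]

theorem setOf_clueSize_uniqDetAt_eq_setOf_card_hitting {S : Set (Fin m → Γ)} {s : Fin m → Γ}
    (hs : s ∈ S) :
    {k : ℕ | ∃ c : Fin m → Option Γ, Satisfies c s ∧ UniqDetAt S c s ∧ clueSize c = k} =
      {k : ℕ | ∃ H : Finset (Fin m), (∀ t ∈ S, t ≠ s → ∃ i ∈ H, s i ≠ t i) ∧ H.card = k} := by
  ext k
  constructor
  · rintro ⟨c, hc, hu, rfl⟩
    refine ⟨Finset.univ.filter fun i => c i ≠ none, fun t ht hts => ?_,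
      (clueSize_eq_card_filter c).symm⟩
    obtain ⟨i, hi, hci⟩ := (uniqDetAt_iff_forall_exists_ne hs hc).mp hu t ht hts
    exact ⟨i, by simpa using hci, hi⟩
  · rintro ⟨H, hH, rfl⟩
    have hc := satisfies_revealOn H s
    refine ⟨revealOn H s, hc, (uniqDetAt_iff_forall_exists_ne hs hc).mpr fun t ht hts => ?_,
      clueSize_revealOn H s⟩
    obtain ⟨i, hiH, hi⟩ := hH t ht hts
    exact ⟨i, hi, revealOn_ne_none_iff.mpr hiH⟩

end

theorem stmt14_general {m : ℕ} {Γ : Type*} (S : Set (Fin m → Γ))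
    (s : Fin m → Γ) (hs : s ∈ S) :
    (∀ c : Fin m → Option Γ, Satisfies c s →
      (UniqDetAt S c s ↔
        ∀ t ∈ S, t ≠ s → ∃ i : Fin m, s i ≠ t i ∧ c i ≠ none)) ∧
    sInf {k : ℕ | ∃ c : Fin m → Option Γ,
        Satisfies c s ∧ UniqDetAt S c s ∧ clueSize c = k} =
      sInf {k : ℕ | ∃ H : Finset (Fin m),
        (∀ t ∈ S, t ≠ s → ∃ i ∈ H, s i ≠ t i) ∧ H.card = k} :=
  ⟨fun _ hc => uniqDetAt_iff_forall_exists_ne hs hc,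
    by rw [setOf_clueSize_uniqDetAt_eq_setOf_card_hitting hs]⟩

theorem stmt14 {m : ℕ} {Γ : Type*} (S : Set (Fin m → Γ))
    (hfin : S.Finite) (hne : S.Nonempty) (s : Fin m → Γ) (hs : s ∈ S) :
    (∀ c : Fin m → Option Γ, Satisfies c s →
      (UniqDetAt S c s ↔
        ∀ t ∈ S, t ≠ s → ∃ i : Fin m, s i ≠ t i ∧ c i ≠ none)) ∧
    sInf {k : ℕ | ∃ c : Fin m → Option Γ,
        Satisfies c s ∧ UniqDetAt S c s ∧ clueSize c = k} =
      sInf {k : ℕ | ∃ H : Finset (Fin m),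
        (∀ t ∈ S, t ≠ s → ∃ i ∈ H, s i ≠ t i) ∧ H.card = k} :=
  stmt14_general S s hs
end
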